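/- arXiv:1507.00881 — 2 statements merged into one kernel-verified Lean document; each statement's English description precedes it below -/
import Mathlib

section
/- For every k ≥ 3, the strong metric dimension of the generalized Petersen graph GP(4k+1, 2) is at most 5k+5. -/
/-- A vertex `w` strongly resolves vertices `u` and `v` in graph `G`:
`u` lies on a shortest `v`–`w` path or `v` lies on a shortest `u`–`w` path,
equivalently via distances. -/
def StronglyResolves {V : Type*} (G : SimpleGraph V) (w u v : V) : Prop :=
  G.dist w u = G.dist w v + G.dist v u ∨ G.dist w v = G.dist w u + G.dist u v

/-- `S` is a strong resolving set of `G`. -/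
def IsStrongResolvingSet {V : Type*} (G : SimpleGraph V) (S : Set V) : Prop :=
  ∀ u v : V, u ≠ v → ∃ w ∈ S, StronglyResolves G w u v

/-- The strong metric dimension: minimum cardinality of a strong resolving set. -/
noncomputable def sdim {V : Type*} (G : SimpleGraph V) : ℕ :=
  sInf {m : ℕ | ∃ S : Set V, IsStrongResolvingSet G S ∧ S.ncard = m}

/-- Mutually maximally distant vertices. -/
def MutuallyMaximallyDistant {V : Type*} (G : SimpleGraph V) (u v : V) : Prop :=
  u ≠ v ∧ (∀ w : V, G.Adj u w → G.dist w v ≤ G.dist u v) ∧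
    (∀ w : V, G.Adj v w → G.dist u w ≤ G.dist u v)

/-- The generalized Petersen graph `GP n k`, with outer vertices `Sum.inl i` (the `uᵢ`)
and inner vertices `Sum.inr i` (the `vᵢ`), indices in `ZMod n`. -/
def GP (n k : ℕ) : SimpleGraph (ZMod n ⊕ ZMod n) where
  Adj x y := match x, y with
    | Sum.inl i, Sum.inl j => i ≠ j ∧ (j = i + 1 ∨ i = j + 1)
    | Sum.inl i, Sum.inr j => i = j
    | Sum.inr i, Sum.inl j => i = j
    | Sum.inr i, Sum.inr j => i ≠ j ∧ (j = i + (k : ZMod n) ∨ i = j + (k : ZMod n))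
  symm := ⟨by rintro (i|i) (j|j) h <;> simp_all <;> tauto⟩
  loopless := ⟨by rintro (i|i) h <;> simp_all⟩

/-! Let `T` consist of `u₀, u₂, …, u_{2k-2}` and `v₀, v₁, …, v_{2k-4}`; its complement has
`5k + 5` elements. A set meeting every mutually maximally distant pair is strongly resolving, so
it suffices that no two vertices of `T` are mutually maximally distant. Up to a rotation or the
reflection of GP(n, 2) such a pair is `(u₀, u_{2t})`, `(v₀, v_d)` or `(u₀, v_d)` with `t`, `d`
small compared with `n`, and then the neighbour `u_{2t+1}` resp. `v_{d+2}` of the second vertex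
is strictly farther from the first one. Upper bounds on distances come from explicit walks, lower
bounds from 1-Lipschitz potentials (which are in fact the exact distances from `u₀` and `v₀`). -/

open SimpleGraph

namespace SimpleGraph

variable {V W : Type*} {G : SimpleGraph V} {G' : SimpleGraph W}

lemma Hom.edist_le (f : G →g G') (u v : V) : G'.edist (f u) (f v) ≤ G.edist u v := by
  conv_rhs => rw [edist_eq_sInf]
  refine le_sInf ?_
  rintro _ ⟨p, rfl⟩
  simpa using G'.edist_le (p.map f)

lemma Iso.dist_eq (φ : G ≃g G') (u v : V) : G'.dist (φ u) (φ v) = G.dist u v := by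
  have h : G'.edist (φ u) (φ v) = G.edist u v :=
    le_antisymm (φ.toHom.edist_le u v) (by simpa using φ.symm.toHom.edist_le (φ u) (φ v))
  simp only [dist, h]

lemma le_add_dist_of_forall_adj (f : V → ℕ) (hf : ∀ x y, G.Adj x y → f y ≤ f x + 1) {u v : V}
    (h : G.Reachable u v) : f v ≤ f u + G.dist u v := by
  obtain ⟨p, hp⟩ := h.exists_walk_length_eq_dist
  rw [← hp]
  clear h hp
  induction p with
  | nil => simp
  | cons hadj _ ih => have := hf _ _ hadj; rw [Walk.length_cons]; omega

lemma dist_le_one_of_adj_or_eq {u v : V} (h : G.Adj u v ∨ u = v) : G.dist u v ≤ 1 := by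
  rcases h with h | rfl
  · exact (dist_eq_one_iff_adj.mpr h).le
  · simp

/-- `v` is maximally distant from `u`. -/
def MaximallyDistant (G : SimpleGraph V) (u v : V) : Prop :=
  ∀ w, G.Adj v w → G.dist u w ≤ G.dist u v

variable (hc : G.Connected)
include hc

lemma Connected.exists_maximallyDistant [Finite V] (u v : V) :
    ∃ w, G.MaximallyDistant u w ∧ G.dist u w = G.dist u v + G.dist v w := by
  obtain ⟨w, hw, hmax⟩ := Set.exists_max_image {w | G.dist u w = G.dist u v + G.dist v w}
    (G.dist u) (Set.toFinite _) ⟨v, by simp⟩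
  refine ⟨w, fun x hx => ?_, hw⟩
  by_contra! hlt
  have hux : G.dist u x ≤ G.dist u v + G.dist v x := hc.dist_triangle
  have hvx : G.dist v x ≤ G.dist v w + G.dist w x := hc.dist_triangle
  have hwx : G.dist w x = 1 := dist_eq_one_iff_adj.mpr hx
  have hmem : G.dist u x = G.dist u v + G.dist v x := by
    simp only [Set.mem_ofPred_eq] at hw
    omega
  exact (hmax x hmem).not_gt hlt

lemma MaximallyDistant.of_dist_eq_add {u a b : V} (hb : G.MaximallyDistant u b)
    (hab : G.dist a b = G.dist a u + G.dist u b) : G.MaximallyDistant a b := fun x hx =>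
  calc G.dist a x ≤ G.dist a u + G.dist u x := hc.dist_triangle
    _ ≤ G.dist a u + G.dist u b := by gcongr; exact hb x hx
    _ = G.dist a b := hab.symm

end SimpleGraph

section MutuallyMaximallyDistant

variable {V W : Type*} {G : SimpleGraph V} {G' : SimpleGraph W}

lemma mutuallyMaximallyDistant_iff {u v : V} :
    MutuallyMaximallyDistant G u v ↔
      u ≠ v ∧ G.MaximallyDistant v u ∧ G.MaximallyDistant u v := by
  have hcomm (w : V) : G.dist w v ≤ G.dist u v ↔ G.dist v w ≤ G.dist v u := by
    rw [dist_comm (u := w), dist_comm (u := u)]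
  simp only [MutuallyMaximallyDistant, MaximallyDistant, hcomm]

lemma MutuallyMaximallyDistant.symm {u v : V} (h : MutuallyMaximallyDistant G u v) :
    MutuallyMaximallyDistant G v u := by
  rw [mutuallyMaximallyDistant_iff] at h ⊢
  exact ⟨h.1.symm, h.2.2, h.2.1⟩

lemma MutuallyMaximallyDistant.map (φ : G ≃g G') {u v : V}
    (h : MutuallyMaximallyDistant G u v) : MutuallyMaximallyDistant G' (φ u) (φ v) := by
  obtain ⟨hne, hu, hv⟩ := h
  refine ⟨φ.injective.ne hne, fun w hw => ?_, fun w hw => ?_⟩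
  · rw [← φ.apply_symm_apply w, φ.dist_eq, φ.dist_eq]
    exact hu _ (by simpa using φ.symm.map_adj_iff.mpr hw)
  · rw [← φ.apply_symm_apply w, φ.dist_eq, φ.dist_eq]
    exact hv _ (by simpa using φ.symm.map_adj_iff.mpr hw)

lemma not_mutuallyMaximallyDistant_of_adj {u v w : V} (hvw : G.Adj v w)
    (hlt : G.dist u v < G.dist u w) : ¬ MutuallyMaximallyDistant G u v :=
  fun h => (h.2.2 w hvw).not_gt hlt

/-- Oellermann and Peters-Fransen. Extend a geodesic from `u` through `v` to a vertex `b` maximally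
distant from `u`, then one from `b` through `u` to `a` maximally distant from `b`: the pair `a, b`
is mutually maximally distant and `u`, `v` both lie on a geodesic between them. -/
lemma isStrongResolvingSet_of_forall_mutuallyMaximallyDistant [Finite V] (hc : G.Connected)
    {S : Set V} (hS : ∀ a b, MutuallyMaximallyDistant G a b → a ∈ S ∨ b ∈ S) :
    IsStrongResolvingSet G S := by
  intro u v huv
  obtain ⟨b, hb, hub⟩ := hc.exists_maximallyDistant u v
  obtain ⟨a, ha, hba⟩ := hc.exists_maximallyDistant b u
  have hcomm (x y : V) : G.dist x y = G.dist y x := dist_comm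
  have hab : G.dist a b = G.dist a u + G.dist u b := by
    rw [hcomm a b, hba, hcomm u a, hcomm b u, add_comm]
  have hpos : 0 < G.dist u v := hc.pos_dist_of_ne huv
  have hmmd : MutuallyMaximallyDistant G a b := by
    refine mutuallyMaximallyDistant_iff.mpr ⟨fun h => ?_, ha, hb.of_dist_eq_add hc hab⟩
    subst h
    rw [SimpleGraph.dist_self] at hab
    omega
  have hav : G.dist a v ≤ G.dist a u + G.dist u v := hc.dist_triangle
  have hab' : G.dist a b ≤ G.dist a v + G.dist v b := hc.dist_triangle
  rcases hS a b hmmd with haS | hbS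
  · exact ⟨a, haS, Or.inr (by omega)⟩
  · refine ⟨b, hbS, Or.inl ?_⟩
    rw [hcomm b u, hub, hcomm b v, hcomm v u, add_comm]

lemma sdim_le_ncard {S : Set V} (hS : IsStrongResolvingSet G S) : sdim G ≤ S.ncard :=
  Nat.sInf_le ⟨S, hS, rfl⟩

end MutuallyMaximallyDistant

lemma ZMod.natCast_inj_of_lt {n a b : ℕ} (ha : a < n) (hb : b < n) :
    (a : ZMod n) = b ↔ a = b := by
  rw [ZMod.natCast_eq_natCast_iff', Nat.mod_eq_of_lt ha, Nat.mod_eq_of_lt hb]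

lemma ZMod.val_add_natCast_eq_or {n : ℕ} [NeZero n] (i : ZMod n) {c : ℕ} (hc : c ≤ n) :
    (i + c).val = i.val + c ∨ (i + c).val + n = i.val + c := by
  rw [ZMod.val_add, ZMod.val_natCast, Nat.add_mod_mod]
  have := i.val_lt
  rcases lt_or_ge (i.val + c) n with h | h
  · exact .inl (Nat.mod_eq_of_lt h)
  · rw [Nat.mod_eq_sub_mod h, Nat.mod_eq_of_lt (by omega)]
    omega

namespace GP

open Sum

variable {n k : ℕ}

@[simp] lemma adj_inl_inl {i j : ZMod n} :
    (GP n k).Adj (inl i) (inl j) ↔ i ≠ j ∧ (j = i + 1 ∨ i = j + 1) := Iff.rfl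

@[simp] lemma adj_inl_inr {i j : ZMod n} : (GP n k).Adj (inl i) (inr j) ↔ i = j := Iff.rfl

@[simp] lemma adj_inr_inl {i j : ZMod n} : (GP n k).Adj (inr i) (inl j) ↔ i = j := Iff.rfl

@[simp] lemma adj_inr_inr {i j : ZMod n} :
    (GP n k).Adj (inr i) (inr j) ↔ i ≠ j ∧ (j = i + k ∨ i = j + k) := Iff.rfl

def rotate (r : ZMod n) : GP n k ≃g GP n k where
  toEquiv := Equiv.sumCongr (Equiv.addLeft r) (Equiv.addLeft r)
  map_rel_iff' := by
    rintro (i | i) (j | j) <;> simp [add_assoc]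

def reflect : GP n k ≃g GP n k where
  toEquiv := Equiv.sumCongr (Equiv.neg _) (Equiv.neg _)
  map_rel_iff' := by
    rintro (i | i) (j | j) <;> simp <;> grind

@[simp] lemma rotate_inl (r i : ZMod n) : rotate (k := k) r (inl i) = inl (r + i) := rfl
@[simp] lemma rotate_inr (r i : ZMod n) : rotate (k := k) r (inr i) = inr (r + i) := rfl
@[simp] lemma reflect_inl (i : ZMod n) : reflect (k := k) (inl i) = inl (-i) := rfl
@[simp] lemma reflect_inr (i : ZMod n) : reflect (k := k) (inr i) = inr (-i) := rfl

lemma adj_or_eq_inl_add_one (a : ZMod n) :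
    (GP n k).Adj (inl a) (inl (a + 1)) ∨ (inl a : ZMod n ⊕ ZMod n) = inl (a + 1) := by
  by_cases h : a = a + 1
  · exact .inr (congrArg inl h)
  · exact .inl ⟨h, .inl rfl⟩

lemma adj_or_eq_inr_add (a : ZMod n) :
    (GP n k).Adj (inr a) (inr (a + k)) ∨ (inr a : ZMod n ⊕ ZMod n) = inr (a + k) := by
  by_cases h : a = a + k
  · exact .inr (congrArg inr h)
  · exact .inl ⟨h, .inl rfl⟩

lemma connected [NeZero n] : (GP n k).Connected := by
  have hinl (m : ℕ) : (GP n k).Reachable (inl 0) (inl (m : ZMod n)) := by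
    induction m with
    | zero => simp
    | succ m ih =>
      have hstep : (GP n k).Reachable (inl (m : ZMod n)) (inl (m + 1)) := by
        rcases adj_or_eq_inl_add_one (k := k) (m : ZMod n) with h | h
        · exact h.reachable
        · rw [h]
      simpa using ih.trans hstep
  have hall : ∀ x, (GP n k).Reachable (inl 0) x := by
    rintro (i | i)
    · simpa using hinl i.val
    · simpa using (hinl i.val).trans (Adj.reachable (show (GP n k).Adj _ (inr i) by simp))
  exact ⟨fun x y => (hall x).symm.trans (hall y)⟩

lemma dist_inl_inr (a : ZMod n) : (GP n k).dist (inl a) (inr a) = 1 :=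
  dist_eq_one_iff_adj.mpr rfl

lemma adj_inl_natCast_succ {j : ℕ} (hj : j + 1 < n) :
    (GP n k).Adj (inl (j : ZMod n)) (inl ((j + 1 : ℕ) : ZMod n)) := by
  refine ⟨fun h => ?_, .inl (Nat.cast_succ j)⟩
  have := (ZMod.natCast_inj_of_lt (by omega) hj).mp h
  omega

lemma adj_inr_natCast_add {j : ℕ} (hk : 0 < k) (hj : j + k < n) :
    (GP n k).Adj (inr (j : ZMod n)) (inr ((j + k : ℕ) : ZMod n)) := by
  refine ⟨fun h => ?_, .inl (Nat.cast_add j k)⟩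
  have := (ZMod.natCast_inj_of_lt (by omega) hj).mp h
  omega

section

variable [NeZero n]

lemma dist_inl_add_le (a : ZMod n) (t : ℕ) :
    (GP n k).dist (inl a) (inl (a + (t : ZMod n))) ≤ t := by
  induction t with
  | zero => simp
  | succ t ih =>
    have hstep := dist_le_one_of_adj_or_eq (adj_or_eq_inl_add_one (k := k) (a + (t : ZMod n)))
    have := (connected (k := k)).dist_triangle (u := inl a) (v := inl (a + (t : ZMod n)))
      (w := inl (a + t + 1))
    push_cast
    rw [← add_assoc]
    omega

lemma dist_inr_add_le (a : ZMod n) (t : ℕ) :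
    (GP n k).dist (inr a) (inr (a + ((k * t : ℕ) : ZMod n))) ≤ t := by
  induction t with
  | zero => simp
  | succ t ih =>
    have hstep :=
      dist_le_one_of_adj_or_eq (adj_or_eq_inr_add (k := k) (a + ((k * t : ℕ) : ZMod n)))
    have := (connected (k := k)).dist_triangle (u := inr a) (v := inr (a + ((k * t : ℕ) : ZMod n)))
      (w := inr (a + ((k * t : ℕ) : ZMod n) + k))
    rw [mul_add, mul_one, Nat.cast_add, ← add_assoc]
    omega

/- For indices `i, j < n`, `j = i + c ∨ j + n = i + c` says `j ≡ i + c [MOD n]`. -/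
lemma le_add_one_of_adj (hk : k ≤ n) {g h : ℕ → ℕ}
    (hg : ∀ i j, i < n → j < n → (j = i + 1 ∨ j + n = i + 1) → g j ≤ g i + 1 ∧ g i ≤ g j + 1)
    (hgh : ∀ i < n, g i ≤ h i + 1 ∧ h i ≤ g i + 1)
    (hh : ∀ i j, i < n → j < n → (j = i + k ∨ j + n = i + k) → h j ≤ h i + 1 ∧ h i ≤ h j + 1)
    {x y : ZMod n ⊕ ZMod n} (hxy : (GP n k).Adj x y) :
    Sum.elim (g ∘ ZMod.val) (h ∘ ZMod.val) y ≤ Sum.elim (g ∘ ZMod.val) (h ∘ ZMod.val) x + 1 := by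
  have hone (i : ZMod n) : (i + 1).val = i.val + 1 ∨ (i + 1).val + n = i.val + 1 := by
    simpa using i.val_add_natCast_eq_or NeZero.one_le
  rcases x with i | i <;> rcases y with j | j <;> simp only [adj_inl_inl, adj_inl_inr,
    adj_inr_inl, adj_inr_inr] at hxy <;> simp only [Sum.elim_inl, Sum.elim_inr, Function.comp]
  · obtain ⟨-, rfl | rfl⟩ := hxy
    · exact (hg _ _ i.val_lt (ZMod.val_lt _) (hone i)).1
    · exact (hg _ _ j.val_lt (ZMod.val_lt _) (hone j)).2
  · exact hxy ▸ (hgh _ i.val_lt).2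
  · exact hxy ▸ (hgh _ i.val_lt).1
  · obtain ⟨-, rfl | rfl⟩ := hxy
    · exact (hh _ _ i.val_lt (ZMod.val_lt _) (i.val_add_natCast_eq_or hk)).1
    · exact (hh _ _ j.val_lt (ZMod.val_lt _) (j.val_add_natCast_eq_or hk)).2

end

/- `twoSided f n j` is the better of walking `j` steps forward or `n - j` steps backward; the
two potentials below are in fact the distances from `u₀` and from `v₀` in GP(n, 2), `n ≥ 3`. -/
def uuProfile (j : ℕ) : ℕ := min j ((j + 1) / 2 + 2)
def uvProfile (j : ℕ) : ℕ := j / 2 + 1 + j % 2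
def vvProfile (j : ℕ) : ℕ := j / 2 + 3 * (j % 2)
def twoSided (f : ℕ → ℕ) (n j : ℕ) : ℕ := min (f j) (f (n - j))

def outerPotential (n : ℕ) : ZMod n ⊕ ZMod n → ℕ :=
  Sum.elim (twoSided uuProfile n ∘ ZMod.val) (twoSided uvProfile n ∘ ZMod.val)

def innerPotential (n : ℕ) : ZMod n ⊕ ZMod n → ℕ :=
  Sum.elim (twoSided uvProfile n ∘ ZMod.val) (twoSided vvProfile n ∘ ZMod.val)

lemma outerPotential_le_dist (hn : 3 ≤ n) (x : ZMod n ⊕ ZMod n) :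
    outerPotential n x ≤ (GP n 2).dist (inl 0) x := by
  have : NeZero n := ⟨by omega⟩
  have hlip {x y} (hxy : (GP n 2).Adj x y) : outerPotential n y ≤ outerPotential n x + 1 := by
    refine le_add_one_of_adj (by omega) (fun i j hi hj h => ?_) (fun i hi => ?_)
      (fun i j hi hj h => ?_) hxy <;> simp only [twoSided, uuProfile, uvProfile]
    · omega
    · omega
    -- `omega` needs the parity of `i` to be split off by hand here
    · obtain ⟨m, rfl | rfl⟩ := Nat.even_or_odd' i <;> omega
  simpa [outerPotential, twoSided, uuProfile] using
    le_add_dist_of_forall_adj _ (fun _ _ => hlip) (connected.preconnected (inl 0) x)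

lemma innerPotential_le_dist (hn : 3 ≤ n) (x : ZMod n ⊕ ZMod n) :
    innerPotential n x ≤ (GP n 2).dist (inr 0) x := by
  have : NeZero n := ⟨by omega⟩
  have hlip {x y} (hxy : (GP n 2).Adj x y) : innerPotential n y ≤ innerPotential n x + 1 := by
    refine le_add_one_of_adj (by omega) (fun i j hi hj h => ?_) (fun i hi => ?_)
      (fun i j hi hj h => ?_) hxy <;> simp only [twoSided, uvProfile, vvProfile]
    · omega
    · omega
    · obtain ⟨m, rfl | rfl⟩ := Nat.even_or_odd' i <;> omega
  simpa [innerPotential, twoSided, vvProfile] using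
    le_add_dist_of_forall_adj _ (fun _ _ => hlip) (connected.preconnected (inr 0) x)

section

variable [NeZero n]

lemma dist_inl_zero_inr_even_le (t : ℕ) :
    (GP n 2).dist (inl 0) (inr ((2 * t : ℕ) : ZMod n)) ≤ t + 1 := by
  have h1 := dist_inl_inr (k := 2) (0 : ZMod n)
  have h2 := dist_inr_add_le (k := 2) (0 : ZMod n) t
  have := (connected (k := 2)).dist_triangle (u := inl 0) (v := inr 0)
    (w := inr ((2 * t : ℕ) : ZMod n))
  rw [zero_add] at h2
  omega

lemma dist_inl_zero_inr_odd_le (t : ℕ) :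
    (GP n 2).dist (inl 0) (inr ((2 * t + 1 : ℕ) : ZMod n)) ≤ t + 2 := by
  have h1 := dist_inl_add_le (k := 2) (0 : ZMod n) 1
  have h2 := dist_inl_inr (k := 2) (1 : ZMod n)
  have h3 := dist_inr_add_le (k := 2) (1 : ZMod n) t
  have := (connected (k := 2)).dist_triangle (u := inl 0) (v := inl 1) (w := inr (1 : ZMod n))
  have := (connected (k := 2)).dist_triangle (u := inl 0) (v := inr 1)
    (w := inr ((2 * t + 1 : ℕ) : ZMod n))
  rw [zero_add, Nat.cast_one] at h1
  rw [add_comm, ← Nat.cast_add_one] at h3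
  omega

lemma dist_inl_zero_inl_even_le (t : ℕ) :
    (GP n 2).dist (inl 0) (inl ((2 * t : ℕ) : ZMod n)) ≤ min (2 * t) (t + 2) := by
  have h1 := dist_inl_add_le (k := 2) (0 : ZMod n) (2 * t)
  have h2 := dist_inl_zero_inr_even_le (n := n) t
  have h3 := dist_inl_inr (k := 2) ((2 * t : ℕ) : ZMod n)
  have := (connected (k := 2)).dist_triangle (u := inl 0) (v := inr ((2 * t : ℕ) : ZMod n))
    (w := inl ((2 * t : ℕ) : ZMod n))
  rw [zero_add] at h1
  rw [dist_comm] at h3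
  omega

lemma dist_inr_zero_inr_even_le (t : ℕ) :
    (GP n 2).dist (inr 0) (inr ((2 * t : ℕ) : ZMod n)) ≤ t := by
  simpa using dist_inr_add_le (k := 2) (0 : ZMod n) t

lemma dist_inr_zero_inr_odd_le (t : ℕ) :
    (GP n 2).dist (inr 0) (inr ((2 * t + 1 : ℕ) : ZMod n)) ≤ t + 3 := by
  have h1 := dist_inl_inr (k := 2) (0 : ZMod n)
  have h2 := dist_inl_zero_inr_odd_le (n := n) t
  have := (connected (k := 2)).dist_triangle (u := inr 0) (v := inl 0)
    (w := inr ((2 * t + 1 : ℕ) : ZMod n))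
  rw [dist_comm] at h1
  omega

end

lemma not_mutuallyMaximallyDistant_inl_zero_inl {t : ℕ} (ht : 1 ≤ t) (hn : 4 * t + 2 ≤ n) :
    ¬ MutuallyMaximallyDistant (GP n 2) (inl 0) (inl ((2 * t : ℕ) : ZMod n)) := by
  have : NeZero n := ⟨by omega⟩
  refine not_mutuallyMaximallyDistant_of_adj (adj_inl_natCast_succ (by omega)) ?_
  have hup := dist_inl_zero_inl_even_le (n := n) t
  have hlow := outerPotential_le_dist (by omega) (inl ((2 * t + 1 : ℕ) : ZMod n))
  simp only [outerPotential, elim_inl, Function.comp,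
    ZMod.val_natCast_of_lt (by omega : 2 * t + 1 < n), twoSided, uuProfile] at hlow
  omega

lemma not_mutuallyMaximallyDistant_inr_zero_inr {d : ℕ} (hd : 1 ≤ d) (hn : 2 * d + 9 ≤ n) :
    ¬ MutuallyMaximallyDistant (GP n 2) (inr 0) (inr (d : ZMod n)) := by
  have : NeZero n := ⟨by omega⟩
  refine not_mutuallyMaximallyDistant_of_adj (adj_inr_natCast_add two_pos (by omega)) ?_
  have hlow := innerPotential_le_dist (by omega) (inr ((d + 2 : ℕ) : ZMod n))
  simp only [innerPotential, elim_inr, Function.comp, ZMod.val_natCast_of_lt (by omega : d + 2 < n),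
    twoSided, vvProfile] at hlow
  obtain ⟨s, rfl | rfl⟩ := Nat.even_or_odd' d
  · have := dist_inr_zero_inr_even_le (n := n) s
    omega
  · have := dist_inr_zero_inr_odd_le (n := n) s
    omega

lemma not_mutuallyMaximallyDistant_inl_zero_inr {d : ℕ} (hn : 2 * d + 5 ≤ n) :
    ¬ MutuallyMaximallyDistant (GP n 2) (inl 0) (inr (d : ZMod n)) := by
  have : NeZero n := ⟨by omega⟩
  refine not_mutuallyMaximallyDistant_of_adj (adj_inr_natCast_add two_pos (by omega)) ?_
  have hlow := outerPotential_le_dist (by omega) (inr ((d + 2 : ℕ) : ZMod n))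
  simp only [outerPotential, elim_inr, Function.comp, ZMod.val_natCast_of_lt (by omega : d + 2 < n),
    twoSided, uvProfile] at hlow
  obtain ⟨s, rfl | rfl⟩ := Nat.even_or_odd' d
  · have := dist_inl_zero_inr_even_le (n := n) s
    omega
  · have := dist_inl_zero_inr_odd_le (n := n) s
    omega

/-- The set `T` of the introduction. -/
def mmdFreeSet (k : ℕ) : Finset (ZMod (4 * k + 1) ⊕ ZMod (4 * k + 1)) :=
  ((Finset.range k).image fun a => ((2 * a : ℕ) : ZMod (4 * k + 1))).disjSum
    ((Finset.range (2 * k - 3)).image fun b : ℕ => (b : ZMod (4 * k + 1)))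

lemma not_mutuallyMaximallyDistant_inl_inl {a b : ℕ} (hab : a < b) (hb : b < k) :
    ¬ MutuallyMaximallyDistant (GP (4 * k + 1) 2)
      (inl ((2 * a : ℕ) : ZMod (4 * k + 1))) (inl ((2 * b : ℕ) : ZMod (4 * k + 1))) := by
  intro h
  have h' := h.map (rotate (-((2 * a : ℕ) : ZMod (4 * k + 1))))
  simp only [rotate_inl, neg_add_cancel] at h'
  rw [neg_add_eq_sub, ← Nat.cast_sub (by omega), ← Nat.mul_sub] at h'
  exact not_mutuallyMaximallyDistant_inl_zero_inl (by omega) (by omega) h'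

lemma not_mutuallyMaximallyDistant_inr_inr {a b : ℕ} (hab : a < b) (hb : b < 2 * k - 3) :
    ¬ MutuallyMaximallyDistant (GP (4 * k + 1) 2)
      (inr (a : ZMod (4 * k + 1))) (inr (b : ZMod (4 * k + 1))) := by
  intro h
  have h' := h.map (rotate (-(a : ZMod (4 * k + 1))))
  simp only [rotate_inr, neg_add_cancel] at h'
  rw [neg_add_eq_sub, ← Nat.cast_sub hab.le] at h'
  exact not_mutuallyMaximallyDistant_inr_zero_inr (by omega) (by omega) h'

lemma not_mutuallyMaximallyDistant_inl_inr {a b : ℕ} (ha : a < k) (hb : b < 2 * k - 3) :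
    ¬ MutuallyMaximallyDistant (GP (4 * k + 1) 2)
      (inl ((2 * a : ℕ) : ZMod (4 * k + 1))) (inr (b : ZMod (4 * k + 1))) := by
  intro h
  rcases le_or_gt (2 * a) b with hle | hlt
  · have h' := h.map (rotate (-((2 * a : ℕ) : ZMod (4 * k + 1))))
    simp only [rotate_inl, rotate_inr, neg_add_cancel] at h'
    rw [neg_add_eq_sub, ← Nat.cast_sub hle] at h'
    exact not_mutuallyMaximallyDistant_inl_zero_inr (by omega) h'
  · have h' := (h.map reflect).map (rotate ((2 * a : ℕ) : ZMod (4 * k + 1)))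
    simp only [reflect_inl, reflect_inr, rotate_inl, rotate_inr, add_neg_cancel] at h'
    rw [← sub_eq_add_neg, ← Nat.cast_sub hlt.le] at h'
    exact not_mutuallyMaximallyDistant_inl_zero_inr (by omega) h'

lemma not_mutuallyMaximallyDistant_of_mem_mmdFreeSet {x y : ZMod (4 * k + 1) ⊕ ZMod (4 * k + 1)}
    (hx : x ∈ mmdFreeSet k) (hy : y ∈ mmdFreeSet k) :
    ¬ MutuallyMaximallyDistant (GP (4 * k + 1) 2) x y := by
  rcases x with i | i <;> rcases y with j | j <;>
    simp only [mmdFreeSet, Finset.inl_mem_disjSum, Finset.inr_mem_disjSum, Finset.mem_image,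
      Finset.mem_range] at hx hy <;>
    obtain ⟨a, ha, rfl⟩ := hx <;> obtain ⟨b, hb, rfl⟩ := hy
  · rcases lt_trichotomy a b with hab | rfl | hab
    · exact not_mutuallyMaximallyDistant_inl_inl hab hb
    · exact fun h => h.1 rfl
    · exact fun h => not_mutuallyMaximallyDistant_inl_inl hab ha h.symm
  · exact not_mutuallyMaximallyDistant_inl_inr ha hb
  · exact fun h => not_mutuallyMaximallyDistant_inl_inr hb ha h.symm
  · rcases lt_trichotomy a b with hab | rfl | hab
    · exact not_mutuallyMaximallyDistant_inr_inr hab hb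
    · exact fun h => h.1 rfl
    · exact fun h => not_mutuallyMaximallyDistant_inr_inr hab ha h.symm

lemma card_compl_mmdFreeSet_le : (mmdFreeSet k)ᶜ.card ≤ 5 * k + 5 := by
  rw [Finset.card_compl, Fintype.card_sum, ZMod.card, mmdFreeSet, Finset.card_disjSum,
    Finset.card_image_of_injOn, Finset.card_image_of_injOn, Finset.card_range, Finset.card_range]
  · omega
  all_goals
    intro a ha b hb h
    simp only [Finset.coe_range, Set.mem_Iio] at ha hb
    have := (ZMod.natCast_inj_of_lt (by omega) (by omega)).mp h
    omega

end GP

theorem stmt_15_general (k : ℕ) : sdim (GP (4*k+1) 2) ≤ 5*k + 5 := by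
  have hS : IsStrongResolvingSet (GP (4*k+1) 2) ↑(GP.mmdFreeSet k)ᶜ :=
    isStrongResolvingSet_of_forall_mutuallyMaximallyDistant GP.connected fun a b hab => by
      by_contra! h
      simp only [Finset.coe_compl, Set.mem_compl_iff, Finset.mem_coe, not_not] at h
      exact GP.not_mutuallyMaximallyDistant_of_mem_mmdFreeSet h.1 h.2 hab
  calc sdim (GP (4*k+1) 2) ≤ (↑(GP.mmdFreeSet k)ᶜ : Set _).ncard := sdim_le_ncard hS
    _ = (GP.mmdFreeSet k)ᶜ.card := Set.ncard_coe_finset _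
    _ ≤ 5 * k + 5 := GP.card_compl_mmdFreeSet_le

/-- For `k ≥ 3`, `sdim (GP (4k+1) 2) ≤ 5k+5`. -/
theorem stmt_15 (k : ℕ) (hk : 3 ≤ k) : sdim (GP (4*k+1) 2) ≤ 5*k + 5 :=
  stmt_15_general k
end

section
/- In the generalized Petersen graph GP(4k,2) with k ≥ 3, for even indices i < j with j − i = 2k, the pair (v_i, v_j) is strongly resolved by both u_i and u_j; indeed u_i, v_i, v_{i+2}, …, v_{i+2k}, u_{i+2k} is a shortest u_i–u_{i+2k} path containing both v_i and v_j. -/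
/-!
Write `‖a‖` for the cyclic distance `|valMinAbs a|` of `a : ZMod n` from `0`. Relative to a
centre `c`, the function `u_a ↦ min (2‖a - c‖) (‖a - c‖ + 4)`, `v_a ↦ ‖a - c‖ + 2` changes by at
most `2` along every edge of `GP(n,2)`, so it is a lower bound for twice the distance from `u_c`.
Evaluated at `c = i` and at the antipode `i + 2k` of `ZMod (4k)` it shows that the walk
`u_i, v_i, v_{i+2}, …, v_{i+2k}, u_{i+2k}` (of length `k + 2`) is shortest, and that each of
`u_i`, `u_{i+2k}` is farther from the far inner vertex than its own spoke partner is;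
since it is adjacent to that partner, the triangle inequality is then an equality.
-/

namespace SimpleGraph

variable {V : Type*} {G : SimpleGraph V}

theorem Walk.le_add_mul_length (f : V → ℕ) (c : ℕ) (hf : ∀ x y, G.Adj x y → f y ≤ f x + c)
    {x y : V} (p : G.Walk x y) : f y ≤ f x + c * p.length := by
  induction p with
  | nil => simp
  | cons h _ ih =>
    rw [length_cons]
    linarith [hf _ _ h]

theorem Reachable.le_add_mul_dist (f : V → ℕ) (c : ℕ) (hf : ∀ x y, G.Adj x y → f y ≤ f x + c)
    {x y : V} (h : G.Reachable x y) : f y ≤ f x + c * G.dist x y := by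
  obtain ⟨p, hp⟩ := h.exists_walk_length_eq_dist
  exact hp ▸ p.le_add_mul_length f c hf

end SimpleGraph

section StronglyResolves

variable {V : Type*} {G : SimpleGraph V} {w u v : V}

theorem stronglyResolves_comm :
    StronglyResolves G w u v ↔ StronglyResolves G w v u :=
  Or.comm

theorem stronglyResolves_of_adj_of_dist_lt (hwu : G.Adj w u) (h : G.dist u v < G.dist w v) :
    StronglyResolves G w u v := by
  have hle := hwu.reachable.dist_triangle_left v
  unfold StronglyResolves
  rw [SimpleGraph.dist_eq_one_iff_adj.mpr hwu] at hle ⊢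
  right
  omega

end StronglyResolves

theorem ZMod.two_ne_zero_of_two_lt {n : ℕ} (hn : 2 < n) : (2 : ZMod n) ≠ 0 := by
  intro h
  have := Nat.le_of_dvd two_pos ((ZMod.natCast_eq_zero_iff 2 n).1 (by exact_mod_cast h))
  omega

theorem ZMod.natAbs_valMinAbs_add_intCast_le {n : ℕ} (a : ZMod n) (m : ℤ) :
    (a + m).valMinAbs.natAbs ≤ a.valMinAbs.natAbs + m.natAbs := by
  refine (natAbs_valMinAbs_add_le a m).trans ((Int.natAbs_add_le _ _).trans ?_)
  gcongr
  rcases n with - | n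
  · rfl
  · exact natAbs_min_of_le_div_two _ _ _ (coe_valMinAbs _) (natAbs_valMinAbs_le _)

namespace GP

variable {n : ℕ}

def potential (c : ZMod n) : ZMod n ⊕ ZMod n → ℕ :=
  Sum.elim (fun a => min (2 * (a - c).valMinAbs.natAbs) ((a - c).valMinAbs.natAbs + 4))
    (fun a => (a - c).valMinAbs.natAbs + 2)

theorem potential_le_add_two_of_adj (c : ZMod n) {x y : ZMod n ⊕ ZMod n}
    (h : (GP n 2).Adj x y) :
    potential c y ≤ potential c x + 2 := by
  have step (a b : ZMod n) (m : ℤ) (hab : b = a + m ∨ a = b + m) :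
      (b - c).valMinAbs.natAbs ≤ (a - c).valMinAbs.natAbs + m.natAbs := by
    obtain rfl | rfl := hab
    · simpa [add_sub_right_comm] using ZMod.natAbs_valMinAbs_add_intCast_le (a - c) m
    · have := ZMod.natAbs_valMinAbs_add_intCast_le (b + (m : ZMod n) - c) (-m)
      rwa [Int.natAbs_neg, Int.cast_neg, sub_add_eq_add_sub, add_neg_cancel_right] at this
  rcases x with a | a <;> rcases y with b | b <;> simp only [GP] at h
  · have := step a b 1 (by exact_mod_cast h.2)
    simp only [potential, Sum.elim_inl]
    omega
  · subst h; simp only [potential, Sum.elim_inl, Sum.elim_inr]; omega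
  · subst h; simp only [potential, Sum.elim_inl, Sum.elim_inr]; omega
  · have := step a b 2 (by exact_mod_cast h.2)
    simp only [potential, Sum.elim_inr]
    omega

theorem adj_inr_add_two (h2 : (2 : ZMod n) ≠ 0) (a : ZMod n) :
    (GP n 2).Adj (.inr a) (.inr (a + 2)) :=
  ⟨by simpa using h2, .inl (by simp)⟩

theorem exists_walk_inr_support (h2 : (2 : ZMod n) ≠ 0) (i t : ℕ) :
    ∃ p : (GP n 2).Walk (.inr (i : ZMod n)) (.inr ((i + 2 * t : ℕ) : ZMod n)),
      p.support = (List.range (t + 1)).map fun s => .inr ((i + 2 * s : ℕ) : ZMod n) := by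
  induction t with
  | zero => exact ⟨.nil, by simp⟩
  | succ t ih =>
    obtain ⟨p, hp⟩ := ih
    have hadj := adj_inr_add_two h2 ((i + 2 * t : ℕ) : ZMod n)
    rw [show ((i + 2 * t : ℕ) : ZMod n) + 2 = ((i + 2 * (t + 1) : ℕ) : ZMod n) by push_cast; ring]
      at hadj
    refine ⟨p.concat hadj, ?_⟩
    rw [SimpleGraph.Walk.support_concat, hp, List.range_succ (n := t + 1), List.map_append]
    rfl

theorem potential_le_add_two_mul_dist (c : ZMod n) {x y : ZMod n ⊕ ZMod n}
    (h : (GP n 2).Reachable x y) : potential c y ≤ potential c x + 2 * (GP n 2).dist x y :=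
  h.le_add_mul_dist _ 2 fun _ _ => potential_le_add_two_of_adj c

end GP

theorem stmt_19_general (k i j : ℕ) (hk : 3 ≤ k)
    (he : j - i = 2*k) :
    StronglyResolves (GP (4*k) 2) (Sum.inl ((i : ℕ) : ZMod (4*k)))
      (Sum.inr ((i : ℕ) : ZMod (4*k))) (Sum.inr ((j : ℕ) : ZMod (4*k))) ∧
    StronglyResolves (GP (4*k) 2) (Sum.inl ((j : ℕ) : ZMod (4*k)))
      (Sum.inr ((i : ℕ) : ZMod (4*k))) (Sum.inr ((j : ℕ) : ZMod (4*k))) ∧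
    ∃ p : (GP (4*k) 2).Walk (Sum.inl ((i : ℕ) : ZMod (4*k)))
        (Sum.inl ((i + 2*k : ℕ) : ZMod (4*k))),
      p.length = (GP (4*k) 2).dist (Sum.inl ((i : ℕ) : ZMod (4*k)))
        (Sum.inl ((i + 2*k : ℕ) : ZMod (4*k))) ∧
      p.support = [Sum.inl ((i : ℕ) : ZMod (4*k))] ++
        ((List.range (k + 1)).map (fun t => Sum.inr ((i + 2*t : ℕ) : ZMod (4*k)))) ++
        [Sum.inl ((i + 2*k : ℕ) : ZMod (4*k))] := by
  obtain rfl : j = i + 2 * k := by omega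
  obtain ⟨w, hw⟩ :=
    GP.exists_walk_inr_support (ZMod.two_ne_zero_of_two_lt (n := 4 * k) (by omega)) i k
  have hlen : w.length = k := by simpa [hw] using w.length_support.symm
  have huc : (GP (4 * k) 2).Adj (.inl (i : ZMod (4 * k))) (.inr _) := rfl
  have hud : (GP (4 * k) 2).Adj (.inr ((i + 2 * k : ℕ) : ZMod (4 * k))) (.inl _) := rfl
  let p := SimpleGraph.Walk.cons huc (w.concat hud)
  have hdc : ((i + 2 * k : ℕ) : ZMod (4 * k)) - i = ((2 * k : ℕ) : ZMod (4 * k)) := by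
    push_cast; ring
  have hcd : (i : ZMod (4 * k)) - (i + 2 * k : ℕ) = -((2 * k : ℕ) : ZMod (4 * k)) := by
    rw [← hdc, neg_sub]
  have hvv := (SimpleGraph.dist_le w).trans hlen.le
  have huv := GP.potential_le_add_two_mul_dist (i : ZMod (4 * k))
    (huc.reachable.trans w.reachable)
  have hvu := GP.potential_le_add_two_mul_dist ((i + 2 * k : ℕ) : ZMod (4 * k))
    (w.reachable.trans hud.reachable).symm
  have huu := GP.potential_le_add_two_mul_dist (i : ZMod (4 * k)) p.reachable
  simp only [GP.potential, Sum.elim_inl, Sum.elim_inr, sub_self, hdc, hcd, ZMod.valMinAbs_zero,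
    Int.natAbs_zero, ZMod.natAbs_valMinAbs_neg,
    ZMod.valMinAbs_natCast_of_le_half (show 2 * k ≤ 4 * k / 2 by omega), Int.natAbs_natCast]
    at huv hvu huu
  refine ⟨stronglyResolves_of_adj_of_dist_lt huc (by omega),
    stronglyResolves_comm.1 (stronglyResolves_of_adj_of_dist_lt hud.symm ?_), p, ?_, ?_⟩
  · rw [SimpleGraph.dist_comm]; omega
  · refine le_antisymm ?_ (SimpleGraph.dist_le p)
    simp only [p, SimpleGraph.Walk.length_cons, SimpleGraph.Walk.length_concat, hlen]
    omega
  · simp [p, hw]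

/-- In `GP (4k) 2` with `k ≥ 3`, for even `i < j` with `j − i = 2k`, the pair
`(vᵢ, vⱼ)` is strongly resolved by both `uᵢ` and `uⱼ`; indeed
`uᵢ, vᵢ, v_{i+2}, …, v_{i+2k}, u_{i+2k}` is a shortest `uᵢ`–`u_{i+2k}` path
containing both `vᵢ` and `vⱼ`. -/
theorem stmt_19 (k i j : ℕ) (hk : 3 ≤ k) (hi : Even i) (hj : Even j) (hij : i < j)
    (he : j - i = 2*k) :
    StronglyResolves (GP (4*k) 2) (Sum.inl ((i : ℕ) : ZMod (4*k)))
      (Sum.inr ((i : ℕ) : ZMod (4*k))) (Sum.inr ((j : ℕ) : ZMod (4*k))) ∧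
    StronglyResolves (GP (4*k) 2) (Sum.inl ((j : ℕ) : ZMod (4*k)))
      (Sum.inr ((i : ℕ) : ZMod (4*k))) (Sum.inr ((j : ℕ) : ZMod (4*k))) ∧
    ∃ p : (GP (4*k) 2).Walk (Sum.inl ((i : ℕ) : ZMod (4*k)))
        (Sum.inl ((i + 2*k : ℕ) : ZMod (4*k))),
      p.length = (GP (4*k) 2).dist (Sum.inl ((i : ℕ) : ZMod (4*k)))
        (Sum.inl ((i + 2*k : ℕ) : ZMod (4*k))) ∧
      p.support = [Sum.inl ((i : ℕ) : ZMod (4*k))] ++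
        ((List.range (k + 1)).map (fun t => Sum.inr ((i + 2*t : ℕ) : ZMod (4*k)))) ++
        [Sum.inl ((i + 2*k : ℕ) : ZMod (4*k))] :=
  stmt_19_general k i j hk he
end
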